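/- With |ψ⁽⁶⁾(a,b)⟩ as defined (family 6 of 4-qubit states), let T₁ = I₂ ⊗ I₂ ⊗ (iσ_y) ⊗ (iσ_y) and let P₁₂ swap the first two tensor factors. Then P₁₂ T₁ |ψ⁽⁶⁾(a,b)⟩ = |ψ⁽⁶⁾(a,−b)⟩ for all a, b ∈ ℂ. -/

import Mathlib

/-! Since `iσ_y = !![0, 1; -1, 0]` sends `|0⟩ ↦ -|1⟩` and `|1⟩ ↦ |0⟩`, the linear map `P₁₂ T₁`
sends `|ijkl⟩` to `±|ji k̄ l̄⟩`. It therefore exchanges `|0000⟩+|1111⟩` with `|0011⟩+|1100⟩`,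
negates `|0101⟩+|1010⟩` and fixes the other two groups of `ψ⁽⁶⁾(a,b)`, which turns the
coefficients `(a+b)/2, b, (a-b)/2` into `(a-b)/2, -b, (a+b)/2`. -/

noncomputable section

open Complex

/-- The 4-qubit state space `(ℂ²)^⊗4`, realized as functions on the computational basis. -/
abbrev Q4 := Fin 2 × Fin 2 × Fin 2 × Fin 2 → ℂ

/-- The computational basis state `|ijkl⟩`. -/
def ket (i j k l : Fin 2) : Q4 := Pi.single (i, j, k, l) 1

/-- The factor-wise action `A ⊗ B ⊗ C ⊗ D` of four one-qubit operators on `(ℂ²)^⊗4`. -/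
def tens4 (A B C D : Matrix (Fin 2) (Fin 2) ℂ) (ψ : Q4) : Q4 := fun x =>
  ∑ y : Fin 2 × Fin 2 × Fin 2 × Fin 2,
    A x.1 y.1 * B x.2.1 y.2.1 * C x.2.2.1 y.2.2.1 * D x.2.2.2 y.2.2.2 * ψ y

/-- The Pauli matrix `σ_y`. -/
def σy : Matrix (Fin 2) (Fin 2) ℂ := !![0, -I; I, 0]

/-- The swap of the first two tensor factors: `|ijkl⟩ ↦ |jikl⟩`. -/
def P12 (ψ : Q4) : Q4 := fun x => ψ (x.2.1, x.1, x.2.2.1, x.2.2.2)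

/-- The family-6 state `|ψ⁽⁶⁾(a,b)⟩`. -/
def ψ6 (a b : ℂ) : Q4 :=
  ((a + b) / 2) • (ket 0 0 0 0 + ket 1 1 1 1)
  + b • (ket 0 1 0 1 + ket 1 0 1 0)
  + I • (ket 1 0 0 1 - ket 0 1 1 0)
  + ((a - b) / 2) • (ket 0 0 1 1 + ket 1 1 0 0)
  + (1 / 2 : ℂ) • (ket 0 0 1 0 + ket 0 1 0 0 + ket 1 0 1 1 + ket 1 1 0 1
      - ket 0 0 0 1 - ket 0 1 1 1 - ket 1 0 0 0 - ket 1 1 1 0)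

def tens4ₗ (A B C D : Matrix (Fin 2) (Fin 2) ℂ) : Q4 →ₗ[ℂ] Q4 where
  toFun := tens4 A B C D
  map_add' ψ φ := by
    funext x
    simp only [tens4, Pi.add_apply, mul_add, Finset.sum_add_distrib]
  map_smul' c ψ := by
    funext x
    simp only [tens4, Pi.smul_apply, smul_eq_mul, RingHom.id_apply, Finset.mul_sum]
    exact Finset.sum_congr rfl fun _ _ => by ring

def P12ₗ : Q4 →ₗ[ℂ] Q4 where
  toFun := P12
  map_add' _ _ := rfl
  map_smul' _ _ := rfl

lemma P12ₗ_ket (i j k l : Fin 2) : P12ₗ (ket i j k l) = ket j i k l := by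
  funext ⟨p, q, r, s⟩
  change ket i j k l (q, p, r, s) = ket j i k l (p, q, r, s)
  simp only [ket, Pi.single_apply, Prod.mk.injEq]
  congr 1
  simp only [eq_iff_iff]
  tauto

lemma tens4ₗ_one_one_ket (C D : Matrix (Fin 2) (Fin 2) ℂ) (i j k l : Fin 2) :
    tens4ₗ 1 1 C D (ket i j k l) = ∑ r, ∑ s, (C r k * D s l) • ket i j r s := by
  funext ⟨p, q, r, s⟩
  by_cases hp : p = i <;> by_cases hq : q = j <;> fin_cases r <;> fin_cases s <;>
    simp [tens4ₗ, tens4, ket, Pi.single_apply, Matrix.one_apply, Finset.sum_apply, hp, hq]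

lemma I_smul_σy : I • σy = !![0, 1; -1, 0] := by
  ext i j
  fin_cases i <;> fin_cases j <;> simp [σy]

/-- applying `T₁ = I₂ ⊗ I₂ ⊗ (iσ_y) ⊗ (iσ_y)` followed by the swap of
the first two qubits maps `|ψ⁽⁶⁾(a,b)⟩` to `|ψ⁽⁶⁾(a,−b)⟩`. -/
theorem stmt_12 (a b : ℂ) :
    P12 (tens4 1 1 (I • σy) (I • σy) (ψ6 a b)) = ψ6 a (-b) := by
  change P12ₗ (tens4ₗ 1 1 (I • σy) (I • σy) (ψ6 a b)) = _
  simp only [ψ6, map_add, map_sub, map_smul, tens4ₗ_one_one_ket, I_smul_σy, Fin.sum_univ_two,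
    P12ₗ_ket]
  simp only [Matrix.of_apply, Matrix.cons_val', Matrix.cons_val_zero, Matrix.cons_val_one,
    Matrix.cons_val_fin_one]
  module
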